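/- Let λ > 0. There exists C = C(λ) > 0 such that for all t, y > 0, ∫₀^∞ x y P_t^{[λ+1]}(x,y) x^{2λ} dx ≤ C, where P_t^{[λ+1]} is the Bessel Poisson kernel of order λ+1. -/

import Mathlib

/-!
Write `A = (x - y)² + t²` and `B = 4xy/π²`. Since `sin θ ≤ θ` and `1 - cos θ ≥ 2θ²/π²` on
`[0, π]`, the kernel `P_t^{[λ+1]}(x, y)` is at most `2(λ+1)t/π` times the integral over `(0, π)` of
`θ^(2λ+1) / (A + Bθ²)^(λ+2)`. When `x ≤ 2y` this integrand is at most `B^(-λ) θ / (A + Bθ²)²`, of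
integral at most `1/(2AB)`; when `x > 2y` it is at most `θ^(2λ-1) / (A^(λ+1) B)` and moreover
`x² ≤ 4A`. Either way `x y P_t^{[λ+1]}(x, y) x^(2λ) ≤ K t / ((x - y)² + t²)`, which is `K π` times
the Cauchy density centred at `y` with scale `t`, of total mass one.
-/

noncomputable section
open MeasureTheory Set

/-- The Bessel Poisson kernel `P_t^{[μ]}(x,y)` of order `μ`. -/
def besselP (mu t x y : ℝ) : ℝ :=
  (2 * mu * t / Real.pi) * ∫ θ in Ioo (0 : ℝ) Real.pi,
    (Real.sin θ) ^ (2 * mu - 1) / (x ^ 2 + y ^ 2 + t ^ 2 - 2 * x * y * Real.cos θ) ^ (mu + 1)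

open Real ProbabilityTheory

lemma rpow_two_mul {x : ℝ} (hx : 0 ≤ x) (lam : ℝ) : x ^ (2 * lam) = (x ^ 2) ^ lam := by
  rw [rpow_mul hx]
  norm_cast

lemma besselP_nonneg {mu t : ℝ} (hmu : 0 ≤ mu) (ht : 0 ≤ t) (x y : ℝ) :
    0 ≤ besselP mu t x y := by
  refine mul_nonneg (by positivity) (setIntegral_nonneg measurableSet_Ioo fun θ hθ => ?_)
  have hsin : 0 ≤ sin θ := sin_nonneg_of_nonneg_of_le_pi hθ.1.le hθ.2.le
  have hden : 0 ≤ x ^ 2 + y ^ 2 + t ^ 2 - 2 * x * y * cos θ := by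
    nlinarith [sq_nonneg (x - y * cos θ), sin_sq_add_cos_sq θ, sq_nonneg (y * sin θ)]
  positivity

lemma besselP_add_one (lam t x y : ℝ) :
    besselP (lam + 1) t x y = 2 * (lam + 1) * t / π * ∫ θ in Ioo 0 π,
      sin θ ^ (2 * lam + 1) / (x ^ 2 + y ^ 2 + t ^ 2 - 2 * x * y * cos θ) ^ (lam + 2) := by
  rw [besselP]
  ring_nf

lemma add_mul_sq_le_sq_add_sq_sub_mul_cos {x y θ : ℝ} (hxy : 0 ≤ x * y) (hθ : |θ| ≤ π) :
    (x - y) ^ 2 + 4 * x * y / π ^ 2 * θ ^ 2 ≤ x ^ 2 + y ^ 2 - 2 * x * y * cos θ := by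
  have hcos := mul_le_mul_of_nonneg_left (cos_le_one_sub_mul_cos_sq hθ)
    (mul_nonneg zero_le_two hxy)
  linarith [show 2 * (x * y) * (1 - 2 / π ^ 2 * θ ^ 2) = 2 * x * y - 4 * x * y / π ^ 2 * θ ^ 2
    by ring]

section PointwiseBounds

variable {lam A B θ : ℝ}

lemma sin_rpow_div_rpow_le {D : ℝ} (hlam : 0 ≤ lam) (hA : 0 < A) (hB : 0 ≤ B)
    (hθ : θ ∈ Icc 0 π) (hD : A + B * θ ^ 2 ≤ D) :
    sin θ ^ (2 * lam + 1) / D ^ (lam + 2) ≤ θ ^ (2 * lam + 1) / (A + B * θ ^ 2) ^ (lam + 2) := by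
  have hE : 0 < A + B * θ ^ 2 := by positivity
  have hsin : 0 ≤ sin θ := sin_nonneg_of_nonneg_of_le_pi hθ.1 hθ.2
  exact div_le_div₀ (rpow_nonneg hθ.1 _) (rpow_le_rpow hsin (sin_le hθ.1) (by linarith))
    (rpow_pos_of_pos hE _) (rpow_le_rpow hE.le hD (by linarith))

lemma rpow_div_add_mul_sq_rpow_eq (hA : 0 < A) (hB : 0 ≤ B) (hθ : 0 < θ) :
    θ ^ (2 * lam + 1) / (A + B * θ ^ 2) ^ (lam + 2)
      = (θ ^ 2 / (A + B * θ ^ 2)) ^ lam * (θ / (A + B * θ ^ 2) ^ 2) := by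
  have hE : 0 < A + B * θ ^ 2 := by positivity
  have hEl : 0 < (A + B * θ ^ 2) ^ lam := rpow_pos_of_pos hE _
  rw [div_rpow (by positivity) hE.le, rpow_add hθ, rpow_add hE, rpow_one, ← rpow_natCast θ 2,
    ← rpow_mul hθ.le]
  push_cast
  field_simp
  norm_cast

lemma rpow_div_add_mul_sq_rpow_le_of_near (hlam : 0 ≤ lam) (hA : 0 < A) (hB : 0 < B)
    (hθ : 0 < θ) :
    θ ^ (2 * lam + 1) / (A + B * θ ^ 2) ^ (lam + 2) ≤ B ^ (-lam) * (θ / (A + B * θ ^ 2) ^ 2) := by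
  rw [rpow_div_add_mul_sq_rpow_eq hA hB.le hθ, rpow_neg hB.le, ← inv_rpow hB.le]
  have hE : 0 < A + B * θ ^ 2 := by positivity
  gcongr
  rw [div_le_iff₀ hE]
  field_simp
  nlinarith [sq_nonneg θ]

lemma rpow_div_add_mul_sq_rpow_le_of_far (hlam : 0 ≤ lam) (hA : 0 < A) (hB : 0 < B)
    (hθ : 0 < θ) :
    θ ^ (2 * lam + 1) / (A + B * θ ^ 2) ^ (lam + 2) ≤ θ ^ (2 * lam - 1) / (A ^ (lam + 1) * B) := by
  have hE : 0 < A + B * θ ^ 2 := by positivity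
  calc θ ^ (2 * lam + 1) / (A + B * θ ^ 2) ^ (lam + 2)
      = θ ^ (2 * lam - 1) * θ ^ 2 / ((A + B * θ ^ 2) ^ (lam + 1) * (A + B * θ ^ 2)) := by
        rw [← rpow_add_one hE.ne', show lam + 1 + 1 = lam + 2 by ring, ← rpow_natCast θ 2,
          ← rpow_add hθ]
        norm_num [show 2 * lam - 1 + 2 = 2 * lam + 1 by ring]
    _ ≤ θ ^ (2 * lam - 1) * θ ^ 2 / (A ^ (lam + 1) * (B * θ ^ 2)) := by
        gcongr
        · linarith [mul_pos hB (pow_pos hθ 2)]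
        · linarith
    _ = θ ^ (2 * lam - 1) / (A ^ (lam + 1) * B) := by
        field_simp

end PointwiseBounds

lemma integral_div_add_mul_sq_sq_le {A B : ℝ} (hA : 0 < A) (hB : 0 < B) {c : ℝ} :
    ∫ θ in (0)..c, θ / (A + B * θ ^ 2) ^ 2 ≤ (2 * A * B)⁻¹ := by
  have hderiv : ∀ θ ∈ uIcc 0 c,
      HasDerivAt (fun θ => -(2 * B * (A + B * θ ^ 2))⁻¹) (θ / (A + B * θ ^ 2) ^ 2) θ := by
    intro θ _
    have hE : 0 < A + B * θ ^ 2 := by positivity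
    refine ((((hasDerivAt_pow 2 θ).const_mul B).const_add A |>.const_mul (2 * B)).inv
      (by positivity)).neg.congr_deriv ?_
    field_simp
    ring
  rw [intervalIntegral.integral_eq_sub_of_hasDerivAt hderiv
    (by apply Continuous.intervalIntegrable; fun_prop (disch := intro θ; positivity))]
  have : 0 ≤ (2 * B * (A + B * c ^ 2))⁻¹ := by positivity
  linarith [show (2 * B * (A + B * 0 ^ 2))⁻¹ = (2 * A * B)⁻¹ by ring]

section KernelBounds

variable {lam t x y : ℝ}

lemma besselP_add_one_le_integral {g : ℝ → ℝ} (hlam : 0 ≤ lam) (ht : 0 < t) (hxy : 0 ≤ x * y)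
    (hg : IntegrableOn g (Ioo 0 π))
    (hle : ∀ θ ∈ Ioo 0 π,
      θ ^ (2 * lam + 1) / ((x - y) ^ 2 + t ^ 2 + 4 * x * y / π ^ 2 * θ ^ 2) ^ (lam + 2) ≤ g θ) :
    besselP (lam + 1) t x y ≤ 2 * (lam + 1) * t / π * ∫ θ in Ioo 0 π, g θ := by
  rw [besselP_add_one]
  refine mul_le_mul_of_nonneg_left (integral_mono_of_nonneg ?_ hg ?_) (by positivity)
  all_goals
    filter_upwards [ae_restrict_mem measurableSet_Ioo] with θ hθ
    have hD := add_mul_sq_le_sq_add_sq_sub_mul_cos hxy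
      (abs_le.2 ⟨by linarith [hθ.1, pi_pos], hθ.2.le⟩)
    have hB : 0 ≤ 4 * x * y / π ^ 2 := div_nonneg (by linarith) (by positivity)
    have hBθ : 0 ≤ 4 * x * y / π ^ 2 * θ ^ 2 := mul_nonneg hB (sq_nonneg θ)
  · have hsin : 0 ≤ sin θ := sin_nonneg_of_nonneg_of_le_pi hθ.1.le hθ.2.le
    exact div_nonneg (rpow_nonneg hsin _) (rpow_nonneg (by nlinarith) _)
  · refine (sin_rpow_div_rpow_le hlam (by positivity) hB (Ioo_subset_Icc_self hθ)
      ?_).trans (hle θ hθ)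
    linarith

lemma besselP_add_one_le_of_near (hlam : 0 ≤ lam) (ht : 0 < t) (hx : 0 < x) (hy : 0 < y) :
    besselP (lam + 1) t x y ≤ 2 * (lam + 1) * t / π *
      ((4 * x * y / π ^ 2) ^ (-lam) * (2 * ((x - y) ^ 2 + t ^ 2) * (4 * x * y / π ^ 2))⁻¹) := by
  have hA : 0 < (x - y) ^ 2 + t ^ 2 := by positivity
  have hB : 0 < 4 * x * y / π ^ 2 := by positivity
  have hcont : Continuous fun θ => θ / ((x - y) ^ 2 + t ^ 2 + 4 * x * y / π ^ 2 * θ ^ 2) ^ 2 := by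
    fun_prop (disch := intro θ; positivity)
  refine (besselP_add_one_le_integral hlam ht (by positivity)
    ((hcont.integrableOn_Ioc.mono_set Ioo_subset_Ioc_self).const_mul _)
    fun θ hθ => rpow_div_add_mul_sq_rpow_le_of_near hlam hA hB hθ.1).trans ?_
  gcongr
  rw [integral_const_mul, ← integral_Ioc_eq_integral_Ioo,
    ← intervalIntegral.integral_of_le pi_pos.le]
  gcongr
  exact integral_div_add_mul_sq_sq_le hA hB

lemma besselP_add_one_le_of_far (hlam : 0 < lam) (ht : 0 < t) (hx : 0 < x) (hy : 0 < y) :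
    besselP (lam + 1) t x y ≤ 2 * (lam + 1) * t / π *
      (π ^ (2 * lam) / (2 * lam) / (((x - y) ^ 2 + t ^ 2) ^ (lam + 1) * (4 * x * y / π ^ 2))) := by
  have hA : 0 < (x - y) ^ 2 + t ^ 2 := by positivity
  have hB : 0 < 4 * x * y / π ^ 2 := by positivity
  have hint : IntervalIntegrable (fun θ : ℝ => θ ^ (2 * lam - 1)) volume 0 π :=
    intervalIntegral.intervalIntegrable_rpow' (by linarith)
  refine (besselP_add_one_le_integral hlam.le ht (by positivity)
    ((hint.1.mono_set Ioo_subset_Ioc_self).div_const _)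
    fun θ hθ => rpow_div_add_mul_sq_rpow_le_of_far hlam.le hA hB hθ.1).trans_eq ?_
  rw [integral_div, ← integral_Ioc_eq_integral_Ioo, ← intervalIntegral.integral_of_le pi_pos.le,
    integral_rpow (Or.inl (by linarith)), zero_rpow (by linarith)]
  ring_nf

lemma mul_besselP_add_one_mul_rpow_le_of_le (hlam : 0 ≤ lam) (ht : 0 < t) (hx : 0 < x)
    (hy : 0 < y) (hxy : x ≤ 2 * y) :
    x * y * besselP (lam + 1) t x y * x ^ (2 * lam)
      ≤ (lam + 1) / π * (π ^ 2 / 4) ^ (lam + 1) * 2 ^ lam * (t / ((x - y) ^ 2 + t ^ 2)) := by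
  have hP := besselP_add_one_le_of_near hlam ht hx hy
  set A := (x - y) ^ 2 + t ^ 2
  set B := 4 * x * y / π ^ 2 with hB_def
  have hA : 0 < A := by positivity
  have hB : 0 < B := by positivity
  have hxyB : x * y / B = π ^ 2 / 4 := by rw [hB_def]; field_simp
  have hweight : x ^ (2 * lam) * B ^ (-lam) = (π ^ 2 / 4) ^ lam * (x / y) ^ lam := by
    rw [rpow_two_mul hx.le, rpow_neg hB.le, ← div_eq_mul_inv, ← div_rpow (by positivity) hB.le,
      ← mul_rpow (by positivity) (by positivity), ← hxyB]
    congr 1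
    field_simp
  clear_value A B
  calc x * y * besselP (lam + 1) t x y * x ^ (2 * lam)
      ≤ x * y * (2 * (lam + 1) * t / π * (B ^ (-lam) * (2 * A * B)⁻¹)) * x ^ (2 * lam) := by
        gcongr
    _ = (lam + 1) / π * (x * y / B) * (x ^ (2 * lam) * B ^ (-lam)) * (t / A) := by
        field_simp
    _ = (lam + 1) / π * (π ^ 2 / 4) ^ (lam + 1) * (x / y) ^ lam * (t / A) := by
        rw [hxyB, hweight, rpow_add_one (by positivity)]
        ring
    _ ≤ (lam + 1) / π * (π ^ 2 / 4) ^ (lam + 1) * 2 ^ lam * (t / A) := by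
        gcongr
        rwa [div_le_iff₀ hy]

lemma mul_besselP_add_one_mul_rpow_le_of_lt (hlam : 0 < lam) (ht : 0 < t) (hx : 0 < x)
    (hy : 0 < y) (hxy : 2 * y < x) :
    x * y * besselP (lam + 1) t x y * x ^ (2 * lam)
      ≤ (lam + 1) / π * (π ^ (2 * lam) / lam) * (π ^ 2 / 4) * 4 ^ lam
        * (t / ((x - y) ^ 2 + t ^ 2)) := by
  have hP := besselP_add_one_le_of_far hlam ht hx hy
  have hx2 : x ^ 2 ≤ 4 * ((x - y) ^ 2 + t ^ 2) := by nlinarith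
  set A := (x - y) ^ 2 + t ^ 2
  set B := 4 * x * y / π ^ 2 with hB_def
  have hA : 0 < A := by positivity
  have hB : 0 < B := by positivity
  have hxyB : x * y / B = π ^ 2 / 4 := by rw [hB_def]; field_simp
  have hweight : x ^ (2 * lam) / A ^ lam = (x ^ 2 / A) ^ lam := by
    rw [rpow_two_mul hx.le, div_rpow (by positivity) hA.le]
  clear_value A B
  have hAl : 0 < A ^ lam := rpow_pos_of_pos hA lam
  calc x * y * besselP (lam + 1) t x y * x ^ (2 * lam)
      ≤ x * y * (2 * (lam + 1) * t / π * (π ^ (2 * lam) / (2 * lam) / (A ^ (lam + 1) * B)))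
          * x ^ (2 * lam) := by
        gcongr
    _ = (lam + 1) / π * (π ^ (2 * lam) / lam) * (x * y / B) * (x ^ (2 * lam) / A ^ lam)
          * (t / A) := by
        rw [rpow_add_one hA.ne']
        field_simp
    _ ≤ (lam + 1) / π * (π ^ (2 * lam) / lam) * (π ^ 2 / 4) * 4 ^ lam * (t / A) := by
        rw [hxyB, hweight]
        gcongr
        rwa [div_le_iff₀ hA]

end KernelBounds

lemma exists_mul_besselP_add_one_mul_rpow_le {lam : ℝ} (hlam : 0 < lam) :
    ∃ K, 0 < K ∧ ∀ t x y : ℝ, 0 < t → 0 < x → 0 < y →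
      x * y * besselP (lam + 1) t x y * x ^ (2 * lam) ≤ K * (t / ((x - y) ^ 2 + t ^ 2)) := by
  set K₁ := (lam + 1) / π * (π ^ 2 / 4) ^ (lam + 1) * 2 ^ lam
  set K₂ := (lam + 1) / π * (π ^ (2 * lam) / lam) * (π ^ 2 / 4) * 4 ^ lam
  have hK₁ : 0 < K₁ := by positivity
  have hK₂ : 0 < K₂ := by positivity
  refine ⟨K₁ + K₂, by positivity, fun t x y ht hx hy => ?_⟩
  have hq : 0 ≤ t / ((x - y) ^ 2 + t ^ 2) := by positivity
  rcases le_or_gt x (2 * y) with hxy | hxy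
  · exact (mul_besselP_add_one_mul_rpow_le_of_le hlam.le ht hx hy hxy).trans
      (mul_le_mul_of_nonneg_right (le_add_of_nonneg_right hK₂.le) hq)
  · exact (mul_besselP_add_one_mul_rpow_le_of_lt hlam ht hx hy hxy).trans
      (mul_le_mul_of_nonneg_right (le_add_of_nonneg_left hK₁.le) hq)

lemma div_sq_add_sq_eq_pi_mul_cauchyPDFReal {t : ℝ} (ht : 0 ≤ t) (x y : ℝ) :
    t / ((x - y) ^ 2 + t ^ 2) = π * cauchyPDFReal y t.toNNReal x := by
  rw [cauchyPDFReal_def, Real.coe_toNNReal t ht]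
  field_simp

/-- There is `C = C(λ)` with `∫₀^∞ x y P_t^{[λ+1]}(x,y) x^{2λ} dx ≤ C` for all `t, y > 0`. -/
theorem stmt11 (lam : ℝ) (hlam : 0 < lam) :
    ∃ C : ℝ, 0 < C ∧ ∀ t y : ℝ, 0 < t → 0 < y →
      ∫ x in Ioi (0 : ℝ), x * y * besselP (lam + 1) t x y * x ^ (2 * lam) ≤ C := by
  obtain ⟨K, hK, hbound⟩ := exists_mul_besselP_add_one_mul_rpow_le hlam
  refine ⟨K * π, by positivity, fun t y ht hy => ?_⟩
  have hp : Integrable fun x => K * (π * cauchyPDFReal y t.toNNReal x) :=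
    ((integrable_cauchyPDFReal _).const_mul _).const_mul _
  calc ∫ x in Ioi (0 : ℝ), x * y * besselP (lam + 1) t x y * x ^ (2 * lam)
      ≤ ∫ x in Ioi (0 : ℝ), K * (π * cauchyPDFReal y t.toNNReal x) := by
        refine integral_mono_of_nonneg ?_ hp.integrableOn ?_ <;>
          filter_upwards [ae_restrict_mem measurableSet_Ioi] with x (hx : 0 < x)
        · have := besselP_nonneg (mu := lam + 1) (by linarith) ht.le x y
          simp only [Pi.zero_apply]
          positivity
        · rw [← div_sq_add_sq_eq_pi_mul_cauchyPDFReal ht.le]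
          exact hbound t x y ht hx hy
    _ ≤ ∫ x, K * (π * cauchyPDFReal y t.toNNReal x) :=
        setIntegral_le_integral hp (ae_of_all _ fun x => by
          have := cauchyPDF_pos y (γ := t.toNNReal) (by simpa using ht) x
          positivity)
    _ = K * π := by
        rw [integral_const_mul, integral_const_mul,
          integral_cauchyPDFReal_eq_one _ (by simpa using ht), mul_one]
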